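/- arXiv:1711.01447 — 5 statements merged into one kernel-verified Lean document; each statement's English description precedes it below -/
import Mathlib

section
/- In the non-zero-sum malware detection game Γ, the set of Defender Nash-equilibrium strategies equals the set of Defender maximin strategies: a Defender mixed strategy ρ* satisfies (∃ μ*, (ρ*,μ*) is a mixed Nash equilibrium of Γ) if and only if ρ* is a maximin strategy of the Defender, i.e. inf over all Attacker mixed strategies μ of U_d(ρ*,μ) is ≥ inf over all μ of U_d(ρ,μ), for every Defender mixed strategy ρ. -/
open Finset Set

/-- Expected security damage bilinear form `S(ρ,μ) = Σ_{j,l} ρ j · μ l · S j l`. -/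
def Sbil {R M : ℕ} (S : Fin R → Fin M → ℝ) (ρ : Fin R → ℝ) (μ : Fin M → ℝ) : ℝ :=
  ∑ j, ∑ l, ρ j * μ l * S j l

/-- Expected inspection cost `k(ρ) = Σ_j ρ j · C j`. -/
def kcost {R : ℕ} (C : Fin R → ℝ) (ρ : Fin R → ℝ) : ℝ :=
  ∑ j, ρ j * C j

/-- Defender expected utility `U_d(ρ,μ) = -S(ρ,μ) - k(ρ)` (same in `Γ₀` and `Γ`). -/
def Ud {R M : ℕ} (S : Fin R → Fin M → ℝ) (C : Fin R → ℝ) (ρ : Fin R → ℝ)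
    (μ : Fin M → ℝ) : ℝ :=
  -Sbil S ρ μ - kcost C ρ

/-- Mixed Nash equilibrium of the zero-sum game `Γ₀`, where the Attacker's
utility is `U_a^{Γ₀}(ρ,μ) = -U_d(ρ,μ)`. -/
def NEzero {R M : ℕ} (S : Fin R → Fin M → ℝ) (C : Fin R → ℝ) (ρs : Fin R → ℝ)
    (μs : Fin M → ℝ) : Prop :=
  ρs ∈ stdSimplex ℝ (Fin R) ∧ μs ∈ stdSimplex ℝ (Fin M) ∧
  (∀ ρ ∈ stdSimplex ℝ (Fin R), Ud S C ρs μs ≥ Ud S C ρ μs) ∧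
  (∀ μ ∈ stdSimplex ℝ (Fin M), -Ud S C ρs μs ≥ -Ud S C ρs μ)

/-- Mixed Nash equilibrium of the non-zero-sum game `Γ`, where the Attacker's
utility is `U_a^{Γ}(ρ,μ) = Ξ·S(ρ,μ)`. -/
def NEgame {R M : ℕ} (S : Fin R → Fin M → ℝ) (C : Fin R → ℝ) (Ξ : ℝ)
    (ρs : Fin R → ℝ) (μs : Fin M → ℝ) : Prop :=
  ρs ∈ stdSimplex ℝ (Fin R) ∧ μs ∈ stdSimplex ℝ (Fin M) ∧
  (∀ ρ ∈ stdSimplex ℝ (Fin R), Ud S C ρs μs ≥ Ud S C ρ μs) ∧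
  (∀ μ ∈ stdSimplex ℝ (Fin M), Ξ * Sbil S ρs μs ≥ Ξ * Sbil S ρs μ)

/-- Maximin strategy of the Defender. -/
def Maximin {R M : ℕ} (S : Fin R → Fin M → ℝ) (C : Fin R → ℝ)
    (ρd : Fin R → ℝ) : Prop :=
  ρd ∈ stdSimplex ℝ (Fin R) ∧
  ∀ ρ ∈ stdSimplex ℝ (Fin R),
    sInf ((Ud S C ρd) '' stdSimplex ℝ (Fin M)) ≥
      sInf ((Ud S C ρ) '' stdSimplex ℝ (Fin M))

/-- The Attacker's best-response set to `ρ` in the non-zero-sum game `Γ`. -/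
def BRset {R M : ℕ} (S : Fin R → Fin M → ℝ) (Ξ : ℝ) (ρ : Fin R → ℝ) :
    Set (Fin M → ℝ) :=
  {μ | μ ∈ stdSimplex ℝ (Fin M) ∧
    ∀ μ' ∈ stdSimplex ℝ (Fin M), Ξ * Sbil S ρ μ ≥ Ξ * Sbil S ρ μ'}

/-- Strong Stackelberg Equilibrium strategy of the Defender in `Γ`. -/
def SSEstrat {R M : ℕ} (S : Fin R → Fin M → ℝ) (C : Fin R → ℝ) (Ξ : ℝ)
    (ρs : Fin R → ℝ) : Prop :=
  ρs ∈ stdSimplex ℝ (Fin R) ∧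
  ∀ ρ ∈ stdSimplex ℝ (Fin R),
    sSup ((Ud S C ρs) '' BRset S Ξ ρs) ≥ sSup ((Ud S C ρ) '' BRset S Ξ ρ)

/-!
For a fixed Defender strategy `ρ`, the Attacker's utility `Ξ·S(ρ,μ)` equals `-Ξ·U_d(ρ,μ)` up to a
term independent of `μ`, so in `Γ` the Attacker's best responses are exactly the minimisers of
`U_d(ρ,·)`, as in the zero-sum game with payoff `U_d`. Since `U_d` is affine in each argument on
compact simplices, the von Neumann (Sion) minimax theorem yields a saddle point `(μ₀, ρ₀)`. A
maximin `ρ*` guarantees at least the value `U_d(ρ₀,μ₀)`, which forces `(ρ*, μ₀)` to be a saddle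
point as well, i.e. an equilibrium; conversely an equilibrium strategy guarantees its payoff,
which no Defender strategy can beat.
-/

section

variable {R M : ℕ} (S : Fin R → Fin M → ℝ) (C : Fin R → ℝ)

theorem Sbil_smul_add_smul_right (ρ : Fin R → ℝ) (μ μ' : Fin M → ℝ) (a b : ℝ) :
    Sbil S ρ (a • μ + b • μ') = a * Sbil S ρ μ + b * Sbil S ρ μ' := by
  simp only [Sbil, Pi.add_apply, Pi.smul_apply, smul_eq_mul, Finset.mul_sum,
    ← Finset.sum_add_distrib]
  exact Finset.sum_congr rfl fun j _ => Finset.sum_congr rfl fun l _ => by ring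

theorem Sbil_smul_add_smul_left (ρ ρ' : Fin R → ℝ) (μ : Fin M → ℝ) (a b : ℝ) :
    Sbil S (a • ρ + b • ρ') μ = a * Sbil S ρ μ + b * Sbil S ρ' μ := by
  simp only [Sbil, Pi.add_apply, Pi.smul_apply, smul_eq_mul, Finset.mul_sum,
    ← Finset.sum_add_distrib]
  exact Finset.sum_congr rfl fun j _ => Finset.sum_congr rfl fun l _ => by ring

theorem kcost_smul_add_smul (ρ ρ' : Fin R → ℝ) (a b : ℝ) :
    kcost C (a • ρ + b • ρ') = a * kcost C ρ + b * kcost C ρ' := by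
  simp only [kcost, Pi.add_apply, Pi.smul_apply, smul_eq_mul, Finset.mul_sum,
    ← Finset.sum_add_distrib]
  exact Finset.sum_congr rfl fun j _ => by ring

theorem convexOn_Ud_right (ρ : Fin R → ℝ) : ConvexOn ℝ (stdSimplex ℝ (Fin M)) (Ud S C ρ) := by
  refine ⟨convex_stdSimplex ℝ _, fun μ _ μ' _ a b _ _ hab => le_of_eq ?_⟩
  simp only [Ud, Sbil_smul_add_smul_right, smul_eq_mul]
  linear_combination kcost C ρ * hab

theorem concaveOn_Ud_left (μ : Fin M → ℝ) :
    ConcaveOn ℝ (stdSimplex ℝ (Fin R)) (fun ρ => Ud S C ρ μ) := by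
  refine ⟨convex_stdSimplex ℝ _, fun ρ _ ρ' _ a b _ _ _ => ge_of_eq ?_⟩
  simp only [Ud, Sbil_smul_add_smul_left, kcost_smul_add_smul, smul_eq_mul]
  ring

theorem continuous_Ud_right (ρ : Fin R → ℝ) : Continuous (Ud S C ρ) := by
  unfold Ud Sbil kcost
  fun_prop

theorem continuous_Ud_left (μ : Fin M → ℝ) : Continuous (fun ρ => Ud S C ρ μ) := by
  unfold Ud Sbil kcost
  fun_prop

theorem exists_isSaddlePointOn_Ud (hR : (stdSimplex ℝ (Fin R)).Nonempty)
    (hM : (stdSimplex ℝ (Fin M)).Nonempty) :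
    ∃ μ₀ ∈ stdSimplex ℝ (Fin M), ∃ ρ₀ ∈ stdSimplex ℝ (Fin R),
      IsSaddlePointOn (stdSimplex ℝ (Fin M)) (stdSimplex ℝ (Fin R))
        (fun μ ρ => Ud S C ρ μ) μ₀ ρ₀ :=
  Sion.exists_isSaddlePointOn hM (convex_stdSimplex ℝ _) (isCompact_stdSimplex ℝ _)
    (fun ρ _ => (continuous_Ud_right S C ρ).lowerSemicontinuous.lowerSemicontinuousOn _)
    (fun ρ _ => (convexOn_Ud_right S C ρ).quasiconvexOn)
    (convex_stdSimplex ℝ _) hR (isCompact_stdSimplex ℝ _)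
    (fun μ _ => (continuous_Ud_left S C μ).upperSemicontinuous.upperSemicontinuousOn _)
    (fun μ _ => (concaveOn_Ud_left S C μ).quasiconcaveOn)

theorem sInf_Ud_image_le (ρ : Fin R → ℝ) {μ : Fin M → ℝ} (hμ : μ ∈ stdSimplex ℝ (Fin M)) :
    sInf (Ud S C ρ '' stdSimplex ℝ (Fin M)) ≤ Ud S C ρ μ :=
  csInf_le ((isCompact_stdSimplex ℝ _).image (continuous_Ud_right S C ρ)).bddBelow
    (mem_image_of_mem _ hμ)

theorem le_sInf_Ud_image {ρ : Fin R → ℝ} {v : ℝ} (hM : (stdSimplex ℝ (Fin M)).Nonempty)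
    (h : ∀ μ ∈ stdSimplex ℝ (Fin M), v ≤ Ud S C ρ μ) :
    v ≤ sInf (Ud S C ρ '' stdSimplex ℝ (Fin M)) :=
  le_csInf (hM.image _) (forall_mem_image.2 h)

theorem mul_Sbil_le_mul_Sbil_iff {Ξ : ℝ} (hΞ : 0 < Ξ) (ρ : Fin R → ℝ) (μ μ' : Fin M → ℝ) :
    Ξ * Sbil S ρ μ ≤ Ξ * Sbil S ρ μ' ↔ Ud S C ρ μ' ≤ Ud S C ρ μ := by
  rw [mul_le_mul_iff_right₀ hΞ]
  unfold Ud
  constructor <;> intro h <;> linarith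

end

theorem stmt2_general {R M : ℕ} (hM : 0 < M)
    (S : Fin R → Fin M → ℝ)
    (C : Fin R → ℝ)
    (Ξ : ℝ) (hΞ : 0 < Ξ)
    (ρs : Fin R → ℝ) :
    (∃ μs, NEgame S C Ξ ρs μs) ↔ Maximin S C ρs := by
  have hΔM : (stdSimplex ℝ (Fin M)).Nonempty := ⟨_, single_mem_stdSimplex ℝ (⟨0, hM⟩ : Fin M)⟩
  constructor
  · rintro ⟨μs, hρs, hμs, hdefender, hattacker⟩
    have hworst : ∀ μ ∈ stdSimplex ℝ (Fin M), Ud S C ρs μs ≤ Ud S C ρs μ := fun μ hμ =>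
      (mul_Sbil_le_mul_Sbil_iff S C hΞ ρs μ μs).1 (hattacker μ hμ)
    have hvalue : Ud S C ρs μs ≤ sInf (Ud S C ρs '' stdSimplex ℝ (Fin M)) :=
      le_sInf_Ud_image S C hΔM hworst
    exact ⟨hρs, fun ρ hρ => ((sInf_Ud_image_le S C ρ hμs).trans (hdefender ρ hρ)).trans hvalue⟩
  · rintro ⟨hρs, hmaximin⟩
    obtain ⟨μ₀, hμ₀, ρ₀, hρ₀, hsaddle⟩ := exists_isSaddlePointOn_Ud S C ⟨ρs, hρs⟩ hΔM
    have hvalue : Ud S C ρ₀ μ₀ ≤ sInf (Ud S C ρs '' stdSimplex ℝ (Fin M)) :=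
      (le_sInf_Ud_image S C hΔM fun μ hμ => hsaddle μ hμ ρ₀ hρ₀).trans (hmaximin ρ₀ hρ₀)
    have hsaddle' : IsSaddlePointOn (stdSimplex ℝ (Fin M)) (stdSimplex ℝ (Fin R))
        (fun μ ρ => Ud S C ρ μ) μ₀ ρs := fun μ hμ ρ hρ =>
      (hsaddle μ₀ hμ₀ ρ hρ).trans (hvalue.trans (sInf_Ud_image_le S C ρs hμ))
    exact ⟨μ₀, hρs, hμ₀, fun ρ hρ => hsaddle' μ₀ hμ₀ ρ hρ,
      fun μ hμ => (mul_Sbil_le_mul_Sbil_iff S C hΞ ρs μ μ₀).2 (hsaddle' μ hμ ρs hρs)⟩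

/-- in `Γ`, the Defender's Nash-equilibrium strategies are exactly
her maximin strategies. -/
theorem stmt2 {R M : ℕ} (hR : 0 < R) (hM : 0 < M)
    (S : Fin R → Fin M → ℝ) (hS : ∀ j l, 0 ≤ S j l)
    (C : Fin R → ℝ) (hC : ∀ j, 0 ≤ C j)
    (Ξ : ℝ) (hΞ : 0 < Ξ)
    (ρs : Fin R → ℝ) :
    (∃ μs, NEgame S C Ξ ρs μs) ↔ Maximin S C ρs :=
  stmt2_general hM S C Ξ hΞ ρs
end

section
/- In the non-zero-sum malware detection game Γ, the set of Defender maximin strategies equals the set of Defender Strong Stackelberg Equilibrium strategies: a Defender mixed strategy ρ* is a maximin strategy (inf over all Attacker mixed strategies μ of U_d(ρ*,μ) is maximal among all Defender mixed strategies) if and only if ρ* is an SSE strategy, i.e. sup over μ ∈ BR(ρ*) of U_d(ρ*,μ) is ≥ sup over μ ∈ BR(ρ) of U_d(ρ,μ) for every Defender mixed strategy ρ, where BR(ρ) is the Attacker's best-response set to ρ under the utility U_a^{Γ}(ρ,μ) = Ξ·S(ρ,μ). -/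
open Finset Set

/-!
For `Ξ > 0` the Attacker's best responses to `ρ` are exactly the maximisers of `S(ρ, ·)` on
the simplex. Since `U_d(ρ, μ) = -S(ρ, μ) - k(ρ)`, these are exactly the minimisers of
`U_d(ρ, ·)`, so `U_d(ρ, ·)` is constant on `BR(ρ)` with value `min_μ U_d(ρ, μ)`. Hence the
Stackelberg value `sup_{BR(ρ)} U_d(ρ, ·)` and the guaranteed value `inf_μ U_d(ρ, μ)` agree for
every `ρ`, and the two optimisation problems over `ρ` coincide.
-/

theorem csSup_image_eq_csInf_image_of_isMinOn {α β : Type*} [ConditionallyCompleteLattice β]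
    {g : α → β} {s t : Set α} (hts : t ⊆ s) {a : α} (ha : a ∈ t)
    (hmin : ∀ b ∈ t, IsMinOn g s b) : sSup (g '' t) = sInf (g '' s) := by
  have himage : g '' t = {g a} := by
    refine eq_singleton_iff_unique_mem.2 ⟨mem_image_of_mem g ha, ?_⟩
    rintro _ ⟨b, hb, rfl⟩
    exact le_antisymm (hmin b hb (hts ha)) (hmin a ha (hts hb))
  have hleast : IsLeast (g '' s) (g a) :=
    ⟨mem_image_of_mem g (hts ha), forall_mem_image.2 (isMinOn_iff.1 (hmin a ha))⟩
  rw [himage, csSup_singleton, hleast.csInf_eq]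

section Game

variable {R M : ℕ} (S : Fin R → Fin M → ℝ) (C : Fin R → ℝ)

theorem continuous_Sbil (ρ : Fin R → ℝ) : Continuous (Sbil S ρ) := by
  unfold Sbil
  fun_prop

variable {S}

theorem mem_BRset_iff {Ξ : ℝ} (hΞ : 0 < Ξ) {ρ : Fin R → ℝ} {μ : Fin M → ℝ} :
    μ ∈ BRset S Ξ ρ ↔
      μ ∈ stdSimplex ℝ (Fin M) ∧ IsMaxOn (Sbil S ρ) (stdSimplex ℝ (Fin M)) μ := by
  simp only [BRset, mem_ofPred_eq, isMaxOn_iff, ge_iff_le, mul_le_mul_iff_right₀ hΞ]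

theorem BRset_subset_stdSimplex (Ξ : ℝ) (ρ : Fin R → ℝ) :
    BRset S Ξ ρ ⊆ stdSimplex ℝ (Fin M) :=
  fun _ hμ ↦ hμ.1

theorem IsMaxOn.isMinOn_Ud {s : Set (Fin M → ℝ)} {ρ : Fin R → ℝ} {μ : Fin M → ℝ}
    (h : IsMaxOn (Sbil S ρ) s μ) : IsMinOn (Ud S C ρ) s μ :=
  isMinOn_iff.2 fun μ' hμ' ↦ by
    simp only [Ud]
    linarith [isMaxOn_iff.1 h μ' hμ']

/-- Both sides are `0` when `M = 0`, by the junk values of `sSup ∅` and `sInf ∅`. -/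
theorem sSup_Ud_image_BRset {Ξ : ℝ} (hΞ : 0 < Ξ) (ρ : Fin R → ℝ) :
    sSup (Ud S C ρ '' BRset S Ξ ρ) = sInf (Ud S C ρ '' stdSimplex ℝ (Fin M)) := by
  rcases (stdSimplex ℝ (Fin M)).eq_empty_or_nonempty with hempty | hne
  · have hBR : BRset S Ξ ρ = ∅ :=
      subset_empty_iff.1 (hempty ▸ BRset_subset_stdSimplex Ξ ρ)
    rw [hBR, hempty, image_empty, Real.sSup_empty, Real.sInf_empty]
  obtain ⟨μm, hμm, hmax⟩ :=
    (isCompact_stdSimplex ℝ (Fin M)).exists_isMaxOn hne (continuous_Sbil S ρ).continuousOn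
  exact csSup_image_eq_csInf_image_of_isMinOn (BRset_subset_stdSimplex Ξ ρ)
    ((mem_BRset_iff hΞ).2 ⟨hμm, hmax⟩) fun μ hμ ↦ ((mem_BRset_iff hΞ).1 hμ).2.isMinOn_Ud C

end Game

theorem stmt3_general {R M : ℕ}
    (S : Fin R → Fin M → ℝ)
    (C : Fin R → ℝ)
    (Ξ : ℝ) (hΞ : 0 < Ξ)
    (ρs : Fin R → ℝ) :
    Maximin S C ρs ↔ SSEstrat S C Ξ ρs := by
  simp only [Maximin, SSEstrat, sSup_Ud_image_BRset C hΞ]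

/-- in `Γ`, the Defender's maximin strategies are exactly her
Strong Stackelberg Equilibrium strategies. -/
theorem stmt3 {R M : ℕ} (hR : 0 < R) (hM : 0 < M)
    (S : Fin R → Fin M → ℝ) (hS : ∀ j l, 0 ≤ S j l)
    (C : Fin R → ℝ) (hC : ∀ j, 0 ≤ C j)
    (Ξ : ℝ) (hΞ : 0 < Ξ)
    (ρs : Fin R → ℝ) :
    Maximin S C ρs ↔ SSEstrat S C Ξ ρs :=
  stmt3_general S C Ξ hΞ ρs
end

section
/- All mixed Nash equilibria of the non-zero-sum malware detection game Γ yield the same expected utility for the Defender: if (ρ₁,μ₁) and (ρ₂,μ₂) are both mixed Nash equilibria of Γ, then U_d(ρ₁,μ₁) = U_d(ρ₂,μ₂). -/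
open Finset Set

/-- all mixed Nash equilibria of `Γ` yield the same expected
utility for the Defender. -/
theorem stmt5 {R M : ℕ} (hR : 0 < R) (hM : 0 < M)
    (S : Fin R → Fin M → ℝ) (hS : ∀ j l, 0 ≤ S j l)
    (C : Fin R → ℝ) (hC : ∀ j, 0 ≤ C j)
    (Ξ : ℝ) (hΞ : 0 < Ξ)
    (ρ₁ : Fin R → ℝ) (μ₁ : Fin M → ℝ) (ρ₂ : Fin R → ℝ) (μ₂ : Fin M → ℝ)
    (h₁ : NEgame S C Ξ ρ₁ μ₁) (h₂ : NEgame S C Ξ ρ₂ μ₂) :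
    Ud S C ρ₁ μ₁ = Ud S C ρ₂ μ₂ := by
  obtain ⟨hρ₁, hμ₁, hd₁, ha₁⟩ := h₁
  obtain ⟨hρ₂, hμ₂, hd₂, ha₂⟩ := h₂
  have a1 : Sbil S ρ₁ μ₁ ≥ Sbil S ρ₁ μ₂ := le_of_mul_le_mul_left (ha₁ μ₂ hμ₂) hΞ
  have a2 : Sbil S ρ₂ μ₂ ≥ Sbil S ρ₂ μ₁ := le_of_mul_le_mul_left (ha₂ μ₁ hμ₁) hΞ
  have d1 : Ud S C ρ₁ μ₁ ≥ Ud S C ρ₂ μ₁ := hd₁ ρ₂ hρ₂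
  have d2 : Ud S C ρ₂ μ₂ ≥ Ud S C ρ₁ μ₂ := hd₂ ρ₁ hρ₁
  have e1 : Ud S C ρ₂ μ₁ ≥ Ud S C ρ₂ μ₂ := by unfold Ud; linarith
  have e2 : Ud S C ρ₁ μ₂ ≥ Ud S C ρ₁ μ₁ := by unfold Ud; linarith
  linarith
end

section
/- The mixed Nash equilibria of the non-zero-sum malware detection game Γ are interchangeable: if (ρ₁,μ₁) and (ρ₂,μ₂) are both mixed Nash equilibria of Γ, then (ρ₁,μ₂) and (ρ₂,μ₁) are also mixed Nash equilibria of Γ. -/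
/-!
For `Ξ > 0` the Attacker's utility `Ξ·S(ρ,μ)` ranks Attacker strategies exactly as
`-U_d(ρ,μ) = S(ρ,μ) + k(ρ)` does, since `k(ρ)` does not depend on `μ`. So `Γ` has the same
equilibria as the zero-sum game `Γ₀`, namely the saddle points of `-U_d` on the product of the
two simplices, and saddle points are interchangeable.
-/

open Finset Set

section SaddlePoint

variable {E F β : Type*} [Preorder β] {X : Set E} {Y : Set F} {f : E → F → β} {a : E} {b : F}

theorem isSaddlePointOn_iff_forall_le (ha : a ∈ X) (hb : b ∈ Y) :
    IsSaddlePointOn X Y f a b ↔ (∀ x ∈ X, f a b ≤ f x b) ∧ ∀ y ∈ Y, f a y ≤ f a b :=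
  ⟨fun h => ⟨fun x hx => h x hx b hb, fun y hy => h a ha y hy⟩,
    fun ⟨hx, hy⟩ x hx' y hy' => (hy y hy').trans (hx x hx')⟩

end SaddlePoint

section MalwareGame

variable {R M : ℕ} {S : Fin R → Fin M → ℝ} {C : Fin R → ℝ} {ρ : Fin R → ℝ} {μ : Fin M → ℝ}

theorem neGame_iff_neZero {Ξ : ℝ} (hΞ : 0 < Ξ) : NEgame S C Ξ ρ μ ↔ NEzero S C ρ μ := by
  have attacker_iff : ∀ μ' : Fin M → ℝ,
      Ξ * Sbil S ρ μ ≥ Ξ * Sbil S ρ μ' ↔ -Ud S C ρ μ ≥ -Ud S C ρ μ' := fun μ' => by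
    simp only [Ud, ge_iff_le, mul_le_mul_iff_right₀ hΞ, neg_sub, sub_neg_eq_add,
      add_le_add_iff_left]
  simp only [NEgame, NEzero, attacker_iff]

theorem neZero_iff_isSaddlePointOn :
    NEzero S C ρ μ ↔ ρ ∈ stdSimplex ℝ (Fin R) ∧ μ ∈ stdSimplex ℝ (Fin M) ∧
      IsSaddlePointOn (stdSimplex ℝ (Fin R)) (stdSimplex ℝ (Fin M)) (fun ρ μ => -Ud S C ρ μ)
        ρ μ := by
  refine ⟨fun ⟨hρ, hμ, hd, ha⟩ => ⟨hρ, hμ, ?_⟩, fun ⟨hρ, hμ, h⟩ => ⟨hρ, hμ, ?_⟩⟩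
  · exact (isSaddlePointOn_iff_forall_le hρ hμ).2
      ⟨fun ρ' hρ' => neg_le_neg (hd ρ' hρ'), ha⟩
  · obtain ⟨hd, ha⟩ := (isSaddlePointOn_iff_forall_le hρ hμ).1 h
    exact ⟨fun ρ' hρ' => neg_le_neg_iff.1 (hd ρ' hρ'), ha⟩

end MalwareGame

theorem stmt6_general {R M : ℕ}
    (S : Fin R → Fin M → ℝ)
    (C : Fin R → ℝ)
    (Ξ : ℝ) (hΞ : 0 < Ξ)
    (ρ₁ : Fin R → ℝ) (μ₁ : Fin M → ℝ) (ρ₂ : Fin R → ℝ) (μ₂ : Fin M → ℝ)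
    (h₁ : NEgame S C Ξ ρ₁ μ₁) (h₂ : NEgame S C Ξ ρ₂ μ₂) :
    NEgame S C Ξ ρ₁ μ₂ ∧ NEgame S C Ξ ρ₂ μ₁ := by
  simp only [neGame_iff_neZero hΞ, neZero_iff_isSaddlePointOn] at h₁ h₂ ⊢
  obtain ⟨hρ₁, hμ₁, hsaddle₁⟩ := h₁
  obtain ⟨hρ₂, hμ₂, hsaddle₂⟩ := h₂
  exact ⟨⟨hρ₁, hμ₂, hsaddle₁.swap_left hρ₂ hμ₁ hsaddle₂⟩,
    ⟨hρ₂, hμ₁, hsaddle₁.swap_right hρ₁ hμ₂ hsaddle₂⟩⟩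

/-- mixed Nash equilibria of `Γ` are interchangeable. -/
theorem stmt6 {R M : ℕ} (hR : 0 < R) (hM : 0 < M)
    (S : Fin R → Fin M → ℝ) (hS : ∀ j l, 0 ≤ S j l)
    (C : Fin R → ℝ) (hC : ∀ j, 0 ≤ C j)
    (Ξ : ℝ) (hΞ : 0 < Ξ)
    (ρ₁ : Fin R → ℝ) (μ₁ : Fin M → ℝ) (ρ₂ : Fin R → ℝ) (μ₂ : Fin M → ℝ)
    (h₁ : NEgame S C Ξ ρ₁ μ₁) (h₂ : NEgame S C Ξ ρ₂ μ₂) :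
    NEgame S C Ξ ρ₁ μ₂ ∧ NEgame S C Ξ ρ₂ μ₁ :=
  stmt6_general S C Ξ hΞ ρ₁ μ₁ ρ₂ μ₂ h₁ h₂
end

section
/- The Defender loses nothing in expectation by playing her pessimistic maximin strategy in the non-zero-sum game Γ: for any mixed Nash equilibrium (ρ*, μ*) of Γ, the Defender's equilibrium expected utility equals her maximin value, i.e. U_d(ρ*, μ*) = sup over Defender mixed strategies ρ of (inf over Attacker mixed strategies μ of U_d(ρ, μ)). -/
open Finset Set

lemma simplex_nonempty' {n : ℕ} (h : 0 < n) : (stdSimplex ℝ (Fin n)).Nonempty := by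
  refine ⟨fun _ => (n : ℝ)⁻¹, fun _ => by positivity, ?_⟩
  have hn : (n : ℝ) ≠ 0 := by positivity
  simp [Finset.sum_const, Finset.card_fin, hn]

lemma simplex_le_one {n : ℕ} {x : Fin n → ℝ} (hx : x ∈ stdSimplex ℝ (Fin n))
    (i : Fin n) : x i ≤ 1 := by
  have h := Finset.single_le_sum (f := x) (fun j _ => hx.1 j) (Finset.mem_univ i)
  rw [hx.2] at h
  exact h

lemma Ud_lower_bound {R M : ℕ} (S : Fin R → Fin M → ℝ) (hS : ∀ j l, 0 ≤ S j l)
    (C : Fin R → ℝ) (hC : ∀ j, 0 ≤ C j)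
    {ρ : Fin R → ℝ} (hρ : ρ ∈ stdSimplex ℝ (Fin R))
    {μ : Fin M → ℝ} (hμ : μ ∈ stdSimplex ℝ (Fin M)) :
    -(∑ j, ∑ l, S j l) - (∑ j, C j) ≤ Ud S C ρ μ := by
  have hSb : Sbil S ρ μ ≤ ∑ j, ∑ l, S j l := by
    apply Finset.sum_le_sum
    intro j _
    apply Finset.sum_le_sum
    intro l _
    have h1 : ρ j * μ l ≤ 1 :=
      mul_le_one₀ (simplex_le_one hρ j) (hμ.1 l) (simplex_le_one hμ l)
    calc ρ j * μ l * S j l ≤ 1 * S j l :=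
          mul_le_mul_of_nonneg_right h1 (hS j l)
      _ = S j l := one_mul _
  have hk : kcost C ρ ≤ ∑ j, C j := by
    apply Finset.sum_le_sum
    intro j _
    nlinarith [hρ.1 j, hC j, simplex_le_one hρ j]
  unfold Ud
  linarith

/-- in `Γ`, the Defender's Nash-equilibrium expected utility
equals her maximin value `sup_ρ inf_μ U_d(ρ,μ)`. -/
theorem stmt11 {R M : ℕ} (hR : 0 < R) (hM : 0 < M)
    (S : Fin R → Fin M → ℝ) (hS : ∀ j l, 0 ≤ S j l)
    (C : Fin R → ℝ) (hC : ∀ j, 0 ≤ C j)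
    (Ξ : ℝ) (hΞ : 0 < Ξ)
    (ρs : Fin R → ℝ) (μs : Fin M → ℝ)
    (hNE : NEgame S C Ξ ρs μs) :
    Ud S C ρs μs =
      sSup ((fun ρ => sInf ((Ud S C ρ) '' stdSimplex ℝ (Fin M))) ''
        stdSimplex ℝ (Fin R)) := by
  obtain ⟨hρ, hμ, hD, hA⟩ := hNE
  -- μs minimizes Ud S C ρs
  have key1 : ∀ μ ∈ stdSimplex ℝ (Fin M), Ud S C ρs μs ≤ Ud S C ρs μ := by
    intro μ hμ'
    have h := hA μ hμ'
    have hs : Sbil S ρs μ ≤ Sbil S ρs μs := le_of_mul_le_mul_left h hΞ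
    unfold Ud
    linarith
  have hMne : (stdSimplex ℝ (Fin M)).Nonempty := simplex_nonempty' hM
  -- bddBelow of any image Ud ρ '' simplex for ρ in simplex
  have hbdd : ∀ ρ ∈ stdSimplex ℝ (Fin R),
      BddBelow ((Ud S C ρ) '' stdSimplex ℝ (Fin M)) := by
    intro ρ hρ'
    refine ⟨-(∑ j, ∑ l, S j l) - (∑ j, C j), ?_⟩
    rintro y ⟨μ, hμ', rfl⟩
    exact Ud_lower_bound S hS C hC hρ' hμ'
  -- step 1 : sInf over μ at ρs equals Ud ρs μs
  have step1 : sInf ((Ud S C ρs) '' stdSimplex ℝ (Fin M)) = Ud S C ρs μs := by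
    apply le_antisymm
    · exact csInf_le (hbdd ρs hρ) ⟨μs, hμ, rfl⟩
    · apply le_csInf (hMne.image _)
      rintro y ⟨μ, hμ', rfl⟩
      exact key1 μ hμ'
  -- the target set
  set T := ((fun ρ => sInf ((Ud S C ρ) '' stdSimplex ℝ (Fin M))) ''
      stdSimplex ℝ (Fin R)) with hT
  have hub : ∀ y ∈ T, y ≤ Ud S C ρs μs := by
    rintro y ⟨ρ, hρ', rfl⟩
    calc sInf ((Ud S C ρ) '' stdSimplex ℝ (Fin M)) ≤ Ud S C ρ μs :=
          csInf_le (hbdd ρ hρ') ⟨μs, hμ, rfl⟩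
      _ ≤ Ud S C ρs μs := hD ρ hρ'
  have hmem : Ud S C ρs μs ∈ T := ⟨ρs, hρ, step1⟩
  exact le_antisymm (le_csSup ⟨Ud S C ρs μs, hub⟩ hmem)
    (csSup_le ⟨_, hmem⟩ hub)
end
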